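/- Fix z ∈ ℂ, d ∈ ℝ, ν ∈ ℤ, and for a real 2×2 matrix g with det g > 0 define Φ_ν(g) = (det g)^d · ( det g / (g₂₁² + g₂₂²) )^{z/2} · ( (g₂₂ - i·g₂₁) / √(g₂₁² + g₂₂²) )^ν. Let H = [[1,0],[0,-1]] and V = [[0,1],[1,0]]. Then for every real 2×2 matrix g with det g > 0, (d/ds)|_{s=0} Φ_ν( g·exp(sH) ) - i · (d/ds)|_{s=0} Φ_ν( g·exp(sV) ) = (z - ν) · Φ_{ν-2}(g), where Φ_{ν-2} is defined by the same formula with ν replaced by ν-2 (and the same z, d). -/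

import Mathlib

/-!
Along a curve `s ↦ g · exp(sX)` with `X` traceless the determinant `D` is constant, so `Φ_ν` only
moves through the bottom row `(c, e)` of `g`, i.e. through `w = e - i c`:
`Φ_ν = D^d (D/|w|²)^{z/2} (w/|w|)^ν`, whose logarithmic derivative is
`ν w'/w - (z + ν) (c c' + e e')/|w|²`. For `P₋ = H - iV` the velocities combine to `w' = -2 w̄` and
`c c' + e e' = (c - i e)² = -w̄²`, so `P₋ Φ_ν = (z - ν) (w̄/w) Φ_ν`, and `w̄/w = (w/|w|)⁻²` is
exactly the factor turning `Φ_ν` into `Φ_{ν-2}`.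
-/

/-- The K-finite vector of weight `ν` in the principal series of `GL₂(ℝ)⁺`:
`Φ_ν(g) = (det g)^d · (det g/(g₂₁²+g₂₂²))^{z/2} · ((g₂₂ - i g₂₁)/√(g₂₁²+g₂₂²))^ν`. -/
noncomputable def Phi (z : ℂ) (d : ℝ) (ν : ℤ) (g : Matrix (Fin 2) (Fin 2) ℝ) : ℂ :=
  ((g.det ^ d : ℝ) : ℂ) *
    ((g.det / (g 1 0 ^ 2 + g 1 1 ^ 2) : ℝ) : ℂ) ^ (z / 2) *
    (((g 1 1 : ℂ) - Complex.I * (g 1 0 : ℂ)) /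
        ((Real.sqrt (g 1 0 ^ 2 + g 1 1 ^ 2) : ℝ) : ℂ)) ^ ν

open Complex

local notation "𝐇" => (!![1, 0; 0, -1] : Matrix (Fin 2) (Fin 2) ℝ)
local notation "𝐕" => (!![0, 1; 1, 0] : Matrix (Fin 2) (Fin 2) ℝ)

lemma exp_smul_H (s : ℝ) : NormedSpace.exp (s • 𝐇) = !![Real.exp s, 0; 0, Real.exp (-s)] := by
  have hdiag : s • 𝐇 = Matrix.diagonal ![s, -s] := by
    ext i j; fin_cases i <;> fin_cases j <;> simp
  rw [hdiag, Matrix.exp_diagonal]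
  ext i j; fin_cases i <;> fin_cases j <;> simp [Pi.exp_def, Real.exp_eq_exp_ℝ]

lemma exp_smul_V (s : ℝ) :
    NormedSpace.exp (s • 𝐕) = !![Real.cosh s, Real.sinh s; Real.sinh s, Real.cosh s] := by
  set P : Matrix (Fin 2) (Fin 2) ℝ := !![1, 1; 1, -1]
  have hPinv : P⁻¹ = (1 / 2 : ℝ) • P :=
    Matrix.inv_eq_right_inv (by simp [P, Matrix.one_fin_two]; norm_num)
  have hP : IsUnit P := by
    simp [Matrix.isUnit_iff_isUnit_det, P, Matrix.det_fin_two_of]; norm_num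
  have hconj : s • 𝐕 = P * (s • 𝐇) * P⁻¹ := by
    rw [hPinv]; ext i j; fin_cases i <;> fin_cases j <;> simp [P, Matrix.mul_apply] <;> ring
  rw [hconj, Matrix.exp_conj _ _ hP, exp_smul_H, hPinv]
  ext i j
  fin_cases i <;> fin_cases j <;> simp [P, Matrix.mul_apply, Real.cosh_eq, Real.sinh_eq] <;> ring

lemma sq_add_sq_pos_of_det_ne_zero {g : Matrix (Fin 2) (Fin 2) ℝ} (hg : g.det ≠ 0) :
    0 < g 1 0 ^ 2 + g 1 1 ^ 2 := by
  by_contra! h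
  have h10 : g 1 0 = 0 := by nlinarith
  have h11 : g 1 1 = 0 := by nlinarith
  simp [Matrix.det_fin_two, h10, h11] at hg

lemma ofReal_sub_I_mul_mul_add_I_mul (c e : ℝ) :
    ((e : ℂ) - I * c) * (e + I * c) = ((c ^ 2 + e ^ 2 : ℝ) : ℂ) := by
  push_cast; linear_combination (-(c : ℂ) ^ 2) * I_sq

lemma ofReal_sub_I_mul_ne_zero {c e : ℝ} (hN : 0 < c ^ 2 + e ^ 2) : (e : ℂ) - I * c ≠ 0 := by
  intro h
  have := ofReal_sub_I_mul_mul_add_I_mul c e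
  rw [h, zero_mul] at this
  exact hN.ne' (by exact_mod_cast this.symm)

lemma HasDerivAt.ofReal_cpow_const_of_pos {f : ℝ → ℝ} {f' t : ℝ} (r : ℂ)
    (hf : HasDerivAt f f' t) (hpos : 0 < f t) :
    HasDerivAt (fun s => (f s : ℂ) ^ r) ((f t : ℂ) ^ r * (r * f' / f t)) t := by
  have hslit : (f t : ℂ) ∈ slitPlane := ofReal_mem_slitPlane.2 hpos
  have hcpow := ((hasStrictDerivAt_cpow_const (c := r) hslit).hasDerivAt.comp_ofReal).scomp t hf
  refine hcpow.congr_deriv ?_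
  rw [cpow_sub _ _ (ofReal_ne_zero.2 hpos.ne'), cpow_one, real_smul]
  field_simp

lemma HasDerivAt.zpow_of_ne_zero {f : ℝ → ℂ} {f' : ℂ} {t : ℝ} (ν : ℤ)
    (hf : HasDerivAt f f' t) (h0 : f t ≠ 0) :
    HasDerivAt (fun s => f s ^ ν) (f t ^ ν * (ν * f' / f t)) t := by
  refine ((hasDerivAt_zpow ν (f t) (Or.inl h0)).comp t hf).congr_deriv ?_
  rw [zpow_sub_one₀ h0]
  field_simp

section BottomRow

variable {c e : ℝ → ℝ} {c' e' t : ℝ}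

lemma HasDerivAt.sq_add_sq (hc : HasDerivAt c c' t) (he : HasDerivAt e e' t) :
    HasDerivAt (fun s => c s ^ 2 + e s ^ 2) (2 * (c t * c' + e t * e')) t :=
  ((hc.pow 2).add (he.pow 2)).congr_deriv (by simp only [Nat.cast_ofNat]; ring)

lemma hasDerivAt_ofReal_div_sq_add_sq_cpow {D : ℝ} (r : ℂ) (hD : 0 < D)
    (hN : 0 < c t ^ 2 + e t ^ 2) (hc : HasDerivAt c c' t) (he : HasDerivAt e e' t) :
    HasDerivAt (fun s => ((D / (c s ^ 2 + e s ^ 2) : ℝ) : ℂ) ^ r)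
      (((D / (c t ^ 2 + e t ^ 2) : ℝ) : ℂ) ^ r *
        (-2 * r * (c t * c' + e t * e') / (c t ^ 2 + e t ^ 2))) t := by
  refine (((hasDerivAt_const t D).div (hc.sq_add_sq he) hN.ne').ofReal_cpow_const_of_pos r
    (div_pos hD hN)).congr_deriv ?_
  have hNc : ((c t : ℂ) ^ 2 + (e t : ℂ) ^ 2) ≠ 0 := by exact_mod_cast hN.ne'
  have hDc : (D : ℂ) ≠ 0 := ofReal_ne_zero.2 hD.ne'
  simp only [Pi.div_apply]
  push_cast
  field_simp
  ring

lemma hasDerivAt_sub_I_mul_div_sqrt_zpow (ν : ℤ) (hN : 0 < c t ^ 2 + e t ^ 2)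
    (hc : HasDerivAt c c' t) (he : HasDerivAt e e' t) :
    HasDerivAt (fun s => (((e s : ℂ) - I * c s) / ((√(c s ^ 2 + e s ^ 2) : ℝ) : ℂ)) ^ ν)
      ((((e t : ℂ) - I * c t) / ((√(c t ^ 2 + e t ^ 2) : ℝ) : ℂ)) ^ ν *
        (ν * ((e' - I * c') / (e t - I * c t) - (c t * c' + e t * e') / (c t ^ 2 + e t ^ 2))))
      t := by
  have hw := ofReal_sub_I_mul_ne_zero hN
  have hρ : ((√(c t ^ 2 + e t ^ 2) : ℝ) : ℂ) ≠ 0 := ofReal_ne_zero.2 (Real.sqrt_pos.2 hN).ne'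
  have hρsq : ((√(c t ^ 2 + e t ^ 2) : ℝ) : ℂ) ^ 2 = (c t : ℂ) ^ 2 + (e t : ℂ) ^ 2 := by
    rw [← ofReal_pow, Real.sq_sqrt hN.le]; push_cast; ring
  refine (((he.ofReal_comp.sub (hc.ofReal_comp.const_mul I)).div
    ((hc.sq_add_sq he).sqrt hN.ne').ofReal_comp hρ).zpow_of_ne_zero ν
    (div_ne_zero hw hρ)).congr_deriv ?_
  have hNc : ((c t : ℂ) ^ 2 + (e t : ℂ) ^ 2) ≠ 0 := by exact_mod_cast hN.ne'
  simp only [Pi.div_apply, Pi.sub_apply]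
  push_cast
  field_simp
  rw [hρsq]
  ring

end BottomRow

lemma hasDerivAt_Phi_comp (z : ℂ) (d : ℝ) (ν : ℤ) {γ : ℝ → Matrix (Fin 2) (Fin 2) ℝ}
    {D t c' e' : ℝ} (hdet : ∀ s, (γ s).det = D) (hD : 0 < D)
    (hc : HasDerivAt (fun s => γ s 1 0) c' t) (he : HasDerivAt (fun s => γ s 1 1) e' t) :
    HasDerivAt (fun s => Phi z d ν (γ s))
      (Phi z d ν (γ t) * (ν * (e' - I * c') / (γ t 1 1 - I * γ t 1 0)
        - (z + ν) * (γ t 1 0 * c' + γ t 1 1 * e') / (γ t 1 0 ^ 2 + γ t 1 1 ^ 2))) t := by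
  have hN := sq_add_sq_pos_of_det_ne_zero (hdet t ▸ hD.ne')
  have := ((hasDerivAt_ofReal_div_sq_add_sq_cpow (z / 2) hD hN hc he).const_mul
    ((D ^ d : ℝ) : ℂ)).mul (hasDerivAt_sub_I_mul_div_sqrt_zpow ν hN hc he)
  simp only [Phi, hdet]
  refine this.congr_deriv ?_
  ring

lemma Phi_sub_two (z : ℂ) (d : ℝ) (ν : ℤ) {g : Matrix (Fin 2) (Fin 2) ℝ}
    (hN : 0 < g 1 0 ^ 2 + g 1 1 ^ 2) :
    Phi z d (ν - 2) g = Phi z d ν g * ((g 1 1 + I * g 1 0) / (g 1 1 - I * g 1 0)) := by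
  have hw := ofReal_sub_I_mul_ne_zero hN
  have hρ : ((√(g 1 0 ^ 2 + g 1 1 ^ 2) : ℝ) : ℂ) ≠ 0 := ofReal_ne_zero.2 (Real.sqrt_pos.2 hN).ne'
  have hρsq : ((√(g 1 0 ^ 2 + g 1 1 ^ 2) : ℝ) : ℂ) ^ 2 = ((g 1 0 ^ 2 + g 1 1 ^ 2 : ℝ) : ℂ) := by
    rw [← ofReal_pow, Real.sq_sqrt hN.le]
  simp only [Phi]
  rw [zpow_sub₀ (div_ne_zero hw hρ), zpow_two, ← pow_two, div_pow, hρsq,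
    ← ofReal_sub_I_mul_mul_add_I_mul]
  field_simp

section Curves

variable (g : Matrix (Fin 2) (Fin 2) ℝ) (s : ℝ)

lemma det_mul_exp_smul_H : (g * NormedSpace.exp (s • 𝐇)).det = g.det := by
  rw [Matrix.det_mul, exp_smul_H, Matrix.det_fin_two_of, ← Real.exp_add]
  simp

lemma det_mul_exp_smul_V : (g * NormedSpace.exp (s • 𝐕)).det = g.det := by
  rw [Matrix.det_mul, exp_smul_V, Matrix.det_fin_two_of, ← sq, ← sq, Real.cosh_sq_sub_sinh_sq,
    mul_one]

variable (z : ℂ) (d : ℝ) (ν : ℤ) {g}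

lemma hasDerivAt_Phi_mul_exp_smul_H (hg : 0 < g.det) :
    HasDerivAt (fun s : ℝ => Phi z d ν (g * NormedSpace.exp (s • 𝐇)))
      (Phi z d ν g * (ν * (-g 1 1 - I * g 1 0) / (g 1 1 - I * g 1 0)
        - (z + ν) * (g 1 0 ^ 2 - g 1 1 ^ 2) / (g 1 0 ^ 2 + g 1 1 ^ 2))) 0 := by
  have hc : HasDerivAt (fun s : ℝ => (g * NormedSpace.exp (s • 𝐇)) 1 0) (g 1 0) 0 := by
    have hfun : (fun s : ℝ => (g * NormedSpace.exp (s • 𝐇)) 1 0) = fun s => g 1 0 * Real.exp s :=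
      funext fun s => by simp only [exp_smul_H]; simp [Matrix.mul_apply]
    rw [hfun]
    simpa using (Real.hasDerivAt_exp 0).const_mul (g 1 0)
  have he : HasDerivAt (fun s : ℝ => (g * NormedSpace.exp (s • 𝐇)) 1 1) (-g 1 1) 0 := by
    have hfun : (fun s : ℝ => (g * NormedSpace.exp (s • 𝐇)) 1 1) = fun s => g 1 1 * Real.exp (-s) :=
      funext fun s => by simp only [exp_smul_H]; simp [Matrix.mul_apply]
    rw [hfun]
    simpa using ((hasDerivAt_neg (0 : ℝ)).exp).const_mul (g 1 1)
  refine (hasDerivAt_Phi_comp z d ν (det_mul_exp_smul_H g) hg hc he).congr_deriv ?_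
  simp only [zero_smul, NormedSpace.exp_zero, mul_one]
  push_cast
  ring

lemma hasDerivAt_Phi_mul_exp_smul_V (hg : 0 < g.det) :
    HasDerivAt (fun s : ℝ => Phi z d ν (g * NormedSpace.exp (s • 𝐕)))
      (Phi z d ν g * (ν * (g 1 0 - I * g 1 1) / (g 1 1 - I * g 1 0)
        - (z + ν) * (2 * g 1 0 * g 1 1) / (g 1 0 ^ 2 + g 1 1 ^ 2))) 0 := by
  have hc : HasDerivAt (fun s : ℝ => (g * NormedSpace.exp (s • 𝐕)) 1 0) (g 1 1) 0 := by
    have hfun : (fun s : ℝ => (g * NormedSpace.exp (s • 𝐕)) 1 0) =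
        fun s => g 1 0 * Real.cosh s + g 1 1 * Real.sinh s :=
      funext fun s => by simp only [exp_smul_V]; simp [Matrix.mul_apply]
    rw [hfun]
    simpa using
      ((Real.hasDerivAt_cosh 0).const_mul (g 1 0)).fun_add
        ((Real.hasDerivAt_sinh 0).const_mul (g 1 1))
  have he : HasDerivAt (fun s : ℝ => (g * NormedSpace.exp (s • 𝐕)) 1 1) (g 1 0) 0 := by
    have hfun : (fun s : ℝ => (g * NormedSpace.exp (s • 𝐕)) 1 1) =
        fun s => g 1 0 * Real.sinh s + g 1 1 * Real.cosh s :=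
      funext fun s => by simp only [exp_smul_V]; simp [Matrix.mul_apply]
    rw [hfun]
    simpa using
      ((Real.hasDerivAt_sinh 0).const_mul (g 1 0)).fun_add
        ((Real.hasDerivAt_cosh 0).const_mul (g 1 1))
  refine (hasDerivAt_Phi_comp z d ν (det_mul_exp_smul_V g) hg hc he).congr_deriv ?_
  simp only [zero_smul, NormedSpace.exp_zero, mul_one]
  ring

end Curves

/-- The lowering operator `P₋ = H - i⊗V` acts on `Φ_ν` by
`(d/ds)|₀ Φ_ν(g·exp(sH)) - i·(d/ds)|₀ Φ_ν(g·exp(sV)) = (z-ν)·Φ_{ν-2}(g)`. -/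
theorem stmt_12 (z : ℂ) (d : ℝ) (ν : ℤ) (g : Matrix (Fin 2) (Fin 2) ℝ) (hg : 0 < g.det) :
    ∃ a b : ℂ,
      HasDerivAt (fun s : ℝ =>
        Phi z d ν (g * NormedSpace.exp (s • (!![1, 0; 0, -1] : Matrix (Fin 2) (Fin 2) ℝ)))) a 0 ∧
      HasDerivAt (fun s : ℝ =>
        Phi z d ν (g * NormedSpace.exp (s • (!![0, 1; 1, 0] : Matrix (Fin 2) (Fin 2) ℝ)))) b 0 ∧
      a - Complex.I * b = (z - (ν : ℂ)) * Phi z d (ν - 2) g := by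
  have hN := sq_add_sq_pos_of_det_ne_zero hg.ne'
  refine ⟨_, _, hasDerivAt_Phi_mul_exp_smul_H z d ν hg, hasDerivAt_Phi_mul_exp_smul_V z d ν hg, ?_⟩
  have hw := ofReal_sub_I_mul_ne_zero hN
  have hNc : ((g 1 0 : ℂ) ^ 2 + (g 1 1 : ℂ) ^ 2) ≠ 0 := by exact_mod_cast hN.ne'
  rw [Phi_sub_two z d ν hN]
  field_simp
  linear_combination
    Phi z d ν g * g 1 1 * (ν * g 1 1 ^ 2 - ν * g 1 0 ^ 2 - 2 * z * g 1 0 ^ 2) * I_sq
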